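/- Let N ≥ 2 and let W_1,…,W_N be m-dimensional subspaces of ℝ^M (1 ≤ m ≤ M). Then there exist indices i ≠ j such that d_c(W_i, W_j)² ≤ (m(M−m)/M) · (N/(N−1)). Equivalently, min_{i≠j} d_c(W_i,W_j)² ≤ (m(M−m)/M) · (N/(N−1)) (the simplex bound). -/

import Mathlib

/-!
With `S = ∑ i, P i`, the squared chordal distances summed over all ordered pairs equal
`N² m - tr (S²)`, since `d_c(P, Q)² = m - tr (P Q)` for orthogonal projections of rank `m`.
Cauchy–Schwarz on the diagonal of `S` gives `tr (S²) ≥ (tr S)² / M = N² m² / M`, so the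
`N (N - 1)` distances with `i ≠ j` sum to at most `N² m (M - m) / M`, and one of them is at most
the average.
-/

open Matrix BigOperators

/-- The Frobenius norm of a real square matrix. -/
noncomputable def frobeniusNorm {M : ℕ} (X : Matrix (Fin M) (Fin M) ℝ) : ℝ :=
  Real.sqrt (Matrix.trace (Xᵀ * X))

/-- The chordal distance between two subspaces of `ℝ^M`, expressed in terms of their
orthogonal projection matrices: `d_c = (1/√2) ‖Q_V − Q_W‖_F`. -/
noncomputable def chordalDist {M : ℕ} (Q₁ Q₂ : Matrix (Fin M) (Fin M) ℝ) : ℝ :=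
  (1 / Real.sqrt 2) * frobeniusNorm (Q₁ - Q₂)

open Finset

theorem Fintype.exists_ne_le_of_sum_le {ι R : Type*} [Fintype ι] [DecidableEq ι] [CommRing R]
    [LinearOrder R] [IsStrictOrderedRing R] (hι : 1 < Fintype.card ι) {f : ι → ι → R}
    (hf : ∀ i, 0 ≤ f i i) {B : R}
    (h : ∑ i, ∑ j, f i j ≤ Fintype.card ι * (Fintype.card ι - 1) * B) :
    ∃ i j, i ≠ j ∧ f i j ≤ B := by
  have hsplit : ∑ i, ∑ j, f i j = ∑ i, f i i + ∑ p ∈ univ.offDiag, f p.1 p.2 := by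
    rw [← sum_product', ← diag_union_offDiag, sum_union (disjoint_diag_offDiag _), sum_diag]
  have hcard :
      ((#(univ : Finset ι).offDiag : ℕ) : R) = Fintype.card ι * (Fintype.card ι - 1) := by
    rw [offDiag_card, card_univ, Nat.cast_sub (Nat.le_mul_self _)]
    push_cast
    ring
  obtain ⟨i, j, hij⟩ := Fintype.exists_pair_of_one_lt_card hι
  have hoff :
      ∑ p ∈ (univ : Finset ι).offDiag, f p.1 p.2 ≤ ∑ _p ∈ (univ : Finset ι).offDiag, B := by
    rw [sum_const, nsmul_eq_mul, hcard]
    have hdiag : 0 ≤ ∑ i, f i i := Finset.sum_nonneg fun i _ => hf i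
    linarith
  obtain ⟨p, hp, hpB⟩ := exists_le_of_sum_le ⟨(i, j), by simpa using hij⟩ hoff
  exact ⟨p.1, p.2, (mem_offDiag.mp hp).2.2, hpB⟩

namespace Matrix

theorem trace_eq_finrank_range_of_isIdempotentElem {n K : Type*} [Fintype n] [DecidableEq n]
    [Field K] {P : Matrix n n K} (hP : IsIdempotentElem P) :
    P.trace = (Module.finrank K (LinearMap.range P.mulVecLin) : K) := by
  have hlin : IsIdempotentElem P.mulVecLin := by
    rw [IsIdempotentElem, Module.End.mul_eq_comp, ← Matrix.mulVecLin_mul, hP.eq]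
  rw [← ((LinearMap.isProj_range_iff_isIdempotentElem _).mpr hlin).trace,
    ← Matrix.trace_toLin'_eq]
  rfl

theorem sq_trace_div_card_le_trace_transpose_mul_self {n R : Type*} [Fintype n] [Field R]
    [LinearOrder R] [IsStrictOrderedRing R] (A : Matrix n n R) :
    A.trace ^ 2 / Fintype.card n ≤ (Aᵀ * A).trace := by
  have hdiag : ∑ i, A i i ^ 2 ≤ (Aᵀ * A).trace := by
    simp only [trace, diag, mul_apply, transpose_apply, ← sq]
    exact sum_le_sum fun i _ =>
      single_le_sum (f := fun k => A k i ^ 2) (fun _ _ => sq_nonneg _) (mem_univ i)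
  refine div_le_of_le_mul₀ (Nat.cast_nonneg _)
    ((sum_nonneg fun i _ => sq_nonneg _).trans hdiag) ?_
  calc A.trace ^ 2 ≤ Fintype.card n * ∑ i, A i i ^ 2 := sq_sum_le_card_mul_sum_sq
    _ ≤ Fintype.card n * (Aᵀ * A).trace := mul_le_mul_of_nonneg_left hdiag (Nat.cast_nonneg _)
    _ = (Aᵀ * A).trace * Fintype.card n := mul_comm _ _

theorem trace_sum_mul_sum {ι n R : Type*} [Fintype ι] [Fintype n] [NonUnitalNonAssocSemiring R]
    (P : ι → Matrix n n R) :
    ((∑ i, P i) * ∑ i, P i).trace = ∑ i, ∑ j, (P i * P j).trace := by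
  simp only [sum_mul_sum, trace_sum]

end Matrix

theorem frobeniusNorm_sq {M : ℕ} (X : Matrix (Fin M) (Fin M) ℝ) :
    frobeniusNorm X ^ 2 = (Xᵀ * X).trace :=
  Real.sq_sqrt (by simpa using (posSemidef_conjTranspose_mul_self X).trace_nonneg)

theorem chordalDist_sq_of_isSymm {M : ℕ} {P Q : Matrix (Fin M) (Fin M) ℝ} (hP : P.IsSymm)
    (hQ : Q.IsSymm) :
    chordalDist P Q ^ 2 = ((P * P).trace + (Q * Q).trace) / 2 - (P * Q).trace := by
  have hPQ : (P - Q)ᵀ * (P - Q) = P * P + Q * Q - (P * Q + Q * P) := by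
    rw [transpose_sub, hP.eq, hQ.eq]; noncomm_ring
  rw [chordalDist, mul_pow, frobeniusNorm_sq, hPQ, trace_sub, trace_add, trace_add,
    trace_mul_comm Q P, div_pow, Real.sq_sqrt zero_le_two]
  ring

theorem simplex_bound_general {M N m : ℕ} (hN : 2 ≤ N) (hmM : m ≤ M)
    (W : Fin N → Submodule ℝ (Fin M → ℝ))
    (P : Fin N → Matrix (Fin M) (Fin M) ℝ)
    (hP : ∀ i, (P i).IsSymm ∧ P i * P i = P i ∧
      LinearMap.range (P i).mulVecLin = W i)
    (hdim : ∀ i, Module.finrank ℝ (W i) = m) :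
    ∃ i j, i ≠ j ∧
      chordalDist (P i) (P j) ^ 2 ≤
        ((m : ℝ) * ((M : ℝ) - (m : ℝ)) / (M : ℝ)) * ((N : ℝ) / ((N : ℝ) - 1)) := by
  have htr : ∀ i, (P i).trace = m := fun i => by
    rw [trace_eq_finrank_range_of_isIdempotentElem (hP i).2.1, (hP i).2.2, hdim i]
  have hdist : ∀ i j, chordalDist (P i) (P j) ^ 2 = m - (P i * P j).trace := fun i j => by
    rw [chordalDist_sq_of_isSymm (hP i).1 (hP j).1, (hP i).2.1, (hP j).2.1, htr, htr]
    ring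
  have hSsymm : (∑ i, P i)ᵀ = ∑ i, P i := by
    simp only [transpose_sum, fun i => (hP i).1.eq]
  refine Fintype.exists_ne_le_of_sum_le (f := fun i j => chordalDist (P i) (P j) ^ 2)
    (by rw [Fintype.card_fin]; omega) (fun i => sq_nonneg _) ?_
  calc ∑ i, ∑ j, chordalDist (P i) (P j) ^ 2
      = N ^ 2 * m - ((∑ i, P i) * ∑ i, P i).trace := by
        simp only [hdist, trace_sum_mul_sum, sum_sub_distrib, sum_const, card_univ,
          Fintype.card_fin, nsmul_eq_mul]
        ring
    _ ≤ N ^ 2 * m - (∑ i, P i).trace ^ 2 / M := by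
        have := sq_trace_div_card_le_trace_transpose_mul_self (∑ i, P i)
        rw [hSsymm, Fintype.card_fin] at this
        linarith
    _ = _ := by
        have hN1 : (N : ℝ) - 1 ≠ 0 := by
          rw [sub_ne_zero]; exact_mod_cast (by omega : N ≠ 1)
        obtain rfl | hM := eq_or_ne M 0
        · simp [Nat.le_zero.mp hmM]
        rw [trace_sum, sum_congr rfl fun i _ => htr i]
        simp only [sum_const, card_univ, Fintype.card_fin, nsmul_eq_mul]
        field_simp

/-- **simplex bound.** Let `N ≥ 2` and let `W 1, …, W N` be
`m`-dimensional subspaces of `ℝ^M` (`1 ≤ m ≤ M`).  Then some pair `i ≠ j` satisfies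
`d_c(Wᵢ, Wⱼ)² ≤ (m(M−m)/M) (N/(N−1))`. -/
theorem simplex_bound {M N m : ℕ} (hN : 2 ≤ N) (hm : 1 ≤ m) (hmM : m ≤ M)
    (W : Fin N → Submodule ℝ (Fin M → ℝ))
    (P : Fin N → Matrix (Fin M) (Fin M) ℝ)
    (hP : ∀ i, (P i).IsSymm ∧ P i * P i = P i ∧
      LinearMap.range (P i).mulVecLin = W i)
    (hdim : ∀ i, Module.finrank ℝ (W i) = m) :
    ∃ i j, i ≠ j ∧
      chordalDist (P i) (P j) ^ 2 ≤
        ((m : ℝ) * ((M : ℝ) - (m : ℝ)) / (M : ℝ)) * ((N : ℝ) / ((N : ℝ) - 1)) :=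
  simplex_bound_general hN hmM W P hP hdim
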